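/- arXiv:2308.06574 — 5 statements merged into one kernel-verified Lean document; each statement's English description precedes it below -/
import Mathlib

section
/- Let 𝒜 be a category with pullbacks and p : E → B a morphism. If p is a pullback-stable strong epimorphism, then the pullback functor p* : 𝒜/B → 𝒜/E reflects isomorphisms. -/
/-!
For `f : X ⟶ Y` over `B`, the map `p*f` is the base change of `f` along the projection
`Y ×_B E ⟶ Y`, which is itself a base change of `p`: a strong epimorphism all of whose base changes
are epimorphisms. Isomorphisms descend along such a map `q`. If the base change of `g` along `q` is
invertible, then `g` precomposed with the base change of `q` is a strong epi, hence so is `g`; and two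
maps equalized by `g` already agree after precomposition with a base change of `q` (their lifts to
the pullback agree), which is an epi, so `g` is mono.
-/

open CategoryTheory Limits

namespace CategoryTheory

open MorphismProperty

variable {C : Type*} [Category C]

lemma IsPullback.mono_of_mono_fst [HasPullbacks C] {A X Y Z : C} {fst : A ⟶ X} {snd : A ⟶ Y}
    {f : X ⟶ Z} {g : Y ⟶ Z} (h : IsPullback fst snd f g) (hf : (epimorphisms C).universally f)
    [Mono fst] : Mono g := by
  refine ⟨fun {W} a b hab => ?_⟩
  let r := pullback.snd f (a ≫ g)
  have : Epi r := hf _ _ _ (IsPullback.of_hasPullback f (a ≫ g)).flip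
  let liftA := h.lift (pullback.fst f (a ≫ g)) (r ≫ a) (by simp [r, pullback.condition])
  let liftB := h.lift (pullback.fst f (a ≫ g)) (r ≫ b) (by simp [r, pullback.condition, hab])
  have hlift : liftA = liftB := by simp [← cancel_mono fst, liftA, liftB]
  rw [← cancel_epi r]
  calc r ≫ a = liftA ≫ snd := (h.lift_snd _ _ _).symm
    _ = liftB ≫ snd := by rw [hlift]
    _ = r ≫ b := h.lift_snd _ _ _

lemma IsPullback.isIso_of_isIso_fst [HasPullbacks C] {A X Y Z : C} {fst : A ⟶ X} {snd : A ⟶ Y}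
    {f : X ⟶ Z} {g : Y ⟶ Z} (h : IsPullback fst snd f g) [StrongEpi f]
    (hf : (epimorphisms C).universally f) [IsIso fst] : IsIso g := by
  have : Mono g := h.mono_of_mono_fst hf
  have : StrongEpi (snd ≫ g) := h.w ▸ strongEpi_comp fst f
  have : StrongEpi g := strongEpi_of_strongEpi snd g
  exact isIso_of_mono_of_strongEpi g

lemma MorphismProperty.universally_epimorphisms_of_epi_pullback_snd [HasPullbacks C] {E B : C}
    {p : E ⟶ B} (hp : ∀ ⦃Z : C⦄ (g : Z ⟶ B), Epi (pullback.snd p g)) :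
    (epimorphisms C).universally p := by
  intro X' Y' i₁ i₂ f' h
  rw [← h.flip.isoPullback_hom_snd]
  exact epi_comp _ _

lemma Over.isPullback_pullback_map_left [HasPullbacks C] {E B : C} (p : E ⟶ B) {X Y : Over B}
    (f : X ⟶ Y) :
    IsPullback ((Over.pullback p).map f).left (pullback.fst X.hom p) (pullback.fst Y.hom p)
      f.left := by
  refine IsPullback.of_right ?_ ?_ (IsPullback.of_hasPullback Y.hom p).flip
  · simp only [Over.pullback_map_left, pullback.lift_snd, Over.w]
    exact (IsPullback.of_hasPullback X.hom p).flip
  · simp only [Over.pullback_map_left, pullback.lift_fst]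

end CategoryTheory

/-- If `p : E ⟶ B` is a pullback-stable strong epimorphism, then the pullback functor
`p* : 𝒜/B ⥤ 𝒜/E` reflects isomorphisms. -/
theorem pullbackFunctor_reflectsIsos_of_pullbackStable_strongEpi
    {𝒜 : Type*} [Category 𝒜] [HasPullbacks 𝒜] {E B : 𝒜} (p : E ⟶ B)
    (hp : ∀ ⦃Z : 𝒜⦄ (g : Z ⟶ B), StrongEpi (pullback.snd p g)) :
    (Over.pullback p).ReflectsIsomorphisms := by
  refine ⟨fun {X Y} f hf => ?_⟩
  have : StrongEpi (pullback.fst Y.hom p) := by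
    rw [← pullbackSymmetry_hom_comp_snd]
    exact strongEpi_comp _ _
  have : IsIso ((Over.pullback p).map f).left :=
    (Over.forget E).map_isIso ((Over.pullback p).map f)
  have : IsIso ((Over.forget B).map f) :=
    (Over.isPullback_pullback_map_left p f).isIso_of_isIso_fst
      (MorphismProperty.pullback_fst _ _
        (MorphismProperty.universally_epimorphisms_of_epi_pullback_snd fun _ g => (hp g).epi))
  exact isIso_of_reflects_iso f (Over.forget B)
end

section
/- Let U : 𝒜 → 𝒳 be a functor between categories such that 𝒳 is pointed (has a zero object), 𝒜 has an initial object 0 and a terminal object 1, U has a left adjoint, U reflects isomorphisms, and U preserves monomorphisms, and suppose 𝒜 admits a factorization of the unique morphism 0 → 1 as a regular epimorphism followed by a monomorphism. Then the unique morphism 0 → 1 in 𝒜 is a regular epimorphism. -/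
/-!
Applying `U` to the mono part `m : Z ⟶ 1` of the factorization gives a mono into a terminal,
hence zero, object of `𝒳`; it is split by `U.obj 1 ⟶ 0 ⟶ U.obj Z`, so it is an isomorphism,
and `U` reflects this. Thus `0 ⟶ 1` is a regular epimorphism followed by an isomorphism.
-/

open CategoryTheory Limits ZeroObject

namespace CategoryTheory

variable {C D : Type*} [Category C] [Category D]

lemma isIso_of_mono_of_isTerminal [HasZeroObject C] {X T : C} (f : X ⟶ T) [Mono f]
    (hT : IsTerminal T) : IsIso f :=
  have : IsSplitEpi f :=
    .mk' ⟨(isZero_zero C).from_ T ≫ (isZero_zero C).to_ X, hT.hom_ext _ _⟩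
  isIso_of_mono_of_isSplitEpi f

lemma Functor.isIso_of_mono_of_isTerminal [HasZeroObject D] (U : C ⥤ D)
    [U.PreservesMonomorphisms] [PreservesLimit (Functor.empty.{0} C) U] [U.ReflectsIsomorphisms]
    {X T : C} (f : X ⟶ T) [Mono f] (hT : IsTerminal T) : IsIso f :=
  have : IsIso (U.map f) := CategoryTheory.isIso_of_mono_of_isTerminal _ (hT.isTerminalObj U)
  isIso_of_reflects_iso f U

noncomputable def RegularEpi.compIsIso {X Y Z : C} {f : X ⟶ Y} (h : RegularEpi f) (g : Y ⟶ Z)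
    [IsIso g] :
    RegularEpi (f ≫ g) :=
  h.ofArrowIso (Arrow.isoMk (Iso.refl X) (asIso g))

end CategoryTheory

theorem initial_to_terminal_regularEpi_general {𝒜 𝒳 : Type*} [Category 𝒜] [Category 𝒳]
    [HasZeroObject 𝒳] [HasInitial 𝒜] [HasTerminal 𝒜]
    (U : 𝒜 ⥤ 𝒳) [U.IsRightAdjoint] [U.ReflectsIsomorphisms]
    (hfac : ∃ (Z : 𝒜) (e : (⊥_ 𝒜) ⟶ Z) (m : Z ⟶ (⊤_ 𝒜)),
      Nonempty (RegularEpi e) ∧ Mono m ∧ e ≫ m = initial.to (⊤_ 𝒜)) :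
    Nonempty (RegularEpi (initial.to (⊤_ 𝒜))) := by
  obtain ⟨Z, e, m, ⟨he⟩, hm, hem⟩ := hfac
  have : IsIso m := U.isIso_of_mono_of_isTerminal m terminalIsTerminal
  exact ⟨hem ▸ he.compIsIso m⟩

/-- Let `U : 𝒜 ⥤ 𝒳` be a functor into a pointed category which has a left adjoint,
reflects isomorphisms, and preserves monomorphisms, where `𝒜` has an initial and a
terminal object. If the unique morphism `0 ⟶ 1` of `𝒜` admits a (regular epi, mono)
factorization, then it is a regular epimorphism. -/
theorem initial_to_terminal_regularEpi {𝒜 𝒳 : Type*} [Category 𝒜] [Category 𝒳]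
    [HasZeroObject 𝒳] [HasInitial 𝒜] [HasTerminal 𝒜]
    (U : 𝒜 ⥤ 𝒳) [U.IsRightAdjoint] [U.ReflectsIsomorphisms] [U.PreservesMonomorphisms]
    (hfac : ∃ (Z : 𝒜) (e : (⊥_ 𝒜) ⟶ Z) (m : Z ⟶ (⊤_ 𝒜)),
      Nonempty (RegularEpi e) ∧ Mono m ∧ e ≫ m = initial.to (⊤_ 𝒜)) :
    Nonempty (RegularEpi (initial.to (⊤_ 𝒜))) :=
  initial_to_terminal_regularEpi_general U hfac
end

section
/- Let 𝒳 be a category with finite limits and finite coproducts, and let T = (T, η, μ) be a monad on 𝒳 that is essentially nullary, i.e., for each object X the canonical morphism [T(!_X), η_X] : T(0) + X → T(X) is a strong epimorphism, where !_X : 0 → X is the unique map from the initial object. Suppose (X₀, h₀) and (X₁, h₁) are T-algebras and X₀ --m--> X --n--> X₁ are morphisms in 𝒳 with n a monomorphism such that the composite n∘m is a morphism of T-algebras (X₀,h₀) → (X₁,h₁). Then there exists a unique T-algebra structure h : T(X) → X on X such that m : (X₀,h₀) → (X,h) and n : (X,h) → (X₁,h₁) are morphisms of T-algebras. -/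
/-!
Since `n` is mono, the only candidate structure is the `h` with `h ≫ n = T.map n ≫ h₁`, and the
algebra laws for `h`, as well as `m` being a morphism, all descend along `n` from those of
`(X₁, h₁)`. Such an `h` exists as the diagonal fill-in of a square whose left side is the strong
epimorphism `[T(!), η] : T(0) + X → T(X)` and whose right side is the mono `n`: on `X` the square
is filled by `𝟙`, and on `T(0)` by the structure of `(X₀, h₀)` followed by `m`.
-/

open CategoryTheory Limits

namespace CategoryTheory.Monad

variable {𝒳 : Type*} [Category 𝒳] (T : Monad 𝒳)

section Descent

variable {A : T.Algebra} {X : 𝒳} {n : X ⟶ A.A} [Mono n] {h : T.obj X ⟶ X}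

theorem unit_eq_of_mono_isHom (hn : T.map n ≫ A.a = h ≫ n) : T.η.app X ≫ h = 𝟙 X := by
  rw [← cancel_mono n, Category.assoc, ← hn, ← T.η.naturality_assoc, A.unit]
  simp

theorem assoc_eq_of_mono_isHom (hn : T.map n ≫ A.a = h ≫ n) :
    T.μ.app X ≫ h = T.map h ≫ h := by
  rw [← cancel_mono n]
  calc (T.μ.app X ≫ h) ≫ n
      = T.map (T.map n) ≫ T.μ.app A.A ≫ A.a := by
        rw [Category.assoc, ← hn]; exact (T.μ.naturality_assoc n A.a).symm
    _ = T.map (T.map n ≫ A.a) ≫ A.a := by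
        rw [A.assoc, Functor.map_comp_assoc]
    _ = (T.map h ≫ h) ≫ n := by rw [hn, Functor.map_comp_assoc, hn, Category.assoc]

theorem map_comp_eq_of_mono_isHom (hn : T.map n ≫ A.a = h ≫ n) {A₀ : T.Algebra}
    {m : A₀.A ⟶ X} (hmn : T.map (m ≫ n) ≫ A.a = A₀.a ≫ m ≫ n) :
    T.map m ≫ h = A₀.a ≫ m := by
  rw [← cancel_mono n, Category.assoc, ← hn, ← Functor.map_comp_assoc, hmn, Category.assoc]

end Descent

variable [HasInitial 𝒳] [HasBinaryCoproducts 𝒳]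

/-- The morphism `[T(!), η] : T(0) + X → T(X)`; `T` is essentially nullary when it is always a
strong epimorphism. -/
noncomputable def nullaryComparison (X : 𝒳) : T.obj (⊥_ 𝒳) ⨿ X ⟶ T.obj X :=
  coprod.desc (T.map (initial.to X)) (T.η.app X)

theorem nullaryComparison_commSq {A₀ A₁ : T.Algebra} {X : 𝒳} (m : A₀.A ⟶ X) (n : X ⟶ A₁.A)
    (hmn : T.map (m ≫ n) ≫ A₁.a = A₀.a ≫ m ≫ n) :
    CommSq (coprod.desc (T.map (initial.to A₀.A) ≫ A₀.a ≫ m) (𝟙 X)) (T.nullaryComparison X) n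
      (T.map n ≫ A₁.a) := by
  refine ⟨coprod.hom_ext ?_ ?_⟩
  · simp only [nullaryComparison, coprod.inl_desc_assoc, Category.assoc, ← hmn,
      ← Functor.map_comp_assoc, initial.to_comp]
  · rw [nullaryComparison, coprod.inr_desc_assoc, coprod.inr_desc_assoc, Category.id_comp,
      ← T.η.naturality_assoc, A₁.unit]
    exact (Category.comp_id n).symm

theorem exists_isHom_of_mono {A₀ A₁ : T.Algebra} {X : 𝒳} [StrongEpi (T.nullaryComparison X)]
    (m : A₀.A ⟶ X) (n : X ⟶ A₁.A) [Mono n] (hmn : T.map (m ≫ n) ≫ A₁.a = A₀.a ≫ m ≫ n) :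
    ∃ h : T.obj X ⟶ X, T.map n ≫ A₁.a = h ≫ n :=
  let sq := T.nullaryComparison_commSq m n hmn
  ⟨sq.lift, sq.fac_right.symm⟩

end CategoryTheory.Monad

open CategoryTheory.Monad in
theorem algebra_structure_lifting_general {𝒳 : Type*} [Category 𝒳]
    [HasFiniteCoproducts 𝒳] (T : Monad 𝒳)
    (hEN : ∀ Y : 𝒳, StrongEpi (coprod.desc (T.map (initial.to Y)) (T.η.app Y)))
    (A₀ A₁ : T.Algebra) {X : 𝒳} (m : A₀.A ⟶ X) (n : X ⟶ A₁.A) [Mono n]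
    (hmn : T.map (m ≫ n) ≫ A₁.a = A₀.a ≫ (m ≫ n)) :
    ∃! h : T.obj X ⟶ X,
      T.η.app X ≫ h = 𝟙 X ∧ T.μ.app X ≫ h = T.map h ≫ h ∧
        T.map m ≫ h = A₀.a ≫ m ∧ T.map n ≫ A₁.a = h ≫ n := by
  have : StrongEpi (T.nullaryComparison X) := hEN X
  obtain ⟨h, hn⟩ := T.exists_isHom_of_mono m n hmn
  refine ⟨h, ⟨T.unit_eq_of_mono_isHom hn, T.assoc_eq_of_mono_isHom hn,
    T.map_comp_eq_of_mono_isHom hn hmn, hn⟩, ?_⟩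
  rintro h' ⟨-, -, -, hn'⟩
  exact (cancel_mono n).1 (hn'.symm.trans hn)

/-- (Lemma 4.1) Let `T` be an essentially nullary monad on a category `𝒳` with finite
limits and finite coproducts. Given `T`-algebras `(X₀,h₀)`, `(X₁,h₁)` and morphisms
`X₀ --m--> X --n--> X₁` with `n` a monomorphism and `n ∘ m` a morphism of `T`-algebras,
`X` admits a unique `T`-algebra structure making `m` and `n` algebra morphisms. -/
theorem algebra_structure_lifting {𝒳 : Type*} [Category 𝒳]
    [HasFiniteLimits 𝒳] [HasFiniteCoproducts 𝒳] (T : Monad 𝒳)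
    (hEN : ∀ Y : 𝒳, StrongEpi (coprod.desc (T.map (initial.to Y)) (T.η.app Y)))
    (A₀ A₁ : T.Algebra) {X : 𝒳} (m : A₀.A ⟶ X) (n : X ⟶ A₁.A) [Mono n]
    (hmn : T.map (m ≫ n) ≫ A₁.a = A₀.a ≫ (m ≫ n)) :
    ∃! h : T.obj X ⟶ X,
      T.η.app X ≫ h = 𝟙 X ∧ T.μ.app X ≫ h = T.map h ≫ h ∧
        T.map m ≫ h = A₀.a ≫ m ∧ T.map n ≫ A₁.a = h ≫ n :=
  algebra_structure_lifting_general T hEN A₀ A₁ m n hmn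
end

section
/- Let 𝒳 be a category with finite limits and finite coproducts and T an essentially nullary monad on 𝒳. Let (X, h) be a T-algebra and R ⇉ X a reflexive relation on X, given by a monomorphism ⟨r₁,r₂⟩ : R → X × X together with a common section e : X → R of r₁ and r₂ (so r₁∘e = r₂∘e = 1_X). Then R admits a unique T-algebra structure k : T(R) → R making r₁, r₂ : (R,k) → (X,h) and e : (X,h) → (R,k) morphisms of T-algebras. -/
/-!
If `m : R ⟶ B` is monic and `B` is a `T`-algebra, a morphism `k : T R ⟶ R` with
`k ≫ m = T m ≫ b` is unique, and it satisfies the algebra laws because they can be checked after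
composing with `m`. For an essentially nullary monad such a `k` exists as soon as the constants
`T 0 ⟶ B` factor through `m`: it is the diagonal filler of the square formed by the strong
epimorphism `[T(!), η] : T 0 ⨿ R ⟶ T R` and `m`. A reflexive relation `R ↪ X × X` contains the
diagonal, which is an algebra morphism into the product algebra, so it contains its constants.
-/

open CategoryTheory Limits

namespace CategoryTheory.Monad

universe v u

variable {𝒳 : Type u} [Category.{v} 𝒳] {T : Monad 𝒳}

namespace Algebra

noncomputable abbrev prod (A B : T.Algebra) [HasBinaryProduct A.A B.A] : T.Algebra where
  A := A.A ⨯ B.A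
  a := prod.lift (T.map prod.fst ≫ A.a) (T.map prod.snd ≫ B.a)
  unit := by ext <;> simp [← T.η.naturality_assoc, A.unit, B.unit]
  assoc := by
    ext <;> simp only [Category.assoc, prod.lift_fst, prod.lift_snd, ← T.μ.naturality_assoc,
      A.assoc, B.assoc, Functor.comp_map, ← T.map_comp_assoc]

lemma map_lift_comp_prod_a {A B : T.Algebra} [HasBinaryProduct A.A B.A] {Y : 𝒳}
    (f : Y ⟶ A.A) (g : Y ⟶ B.A) :
    T.map (prod.lift f g) ≫ (A.prod B).a = prod.lift (T.map f ≫ A.a) (T.map g ≫ B.a) := by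
  ext <;> simp only [Category.assoc, prod.lift_fst, prod.lift_snd, ← T.map_comp_assoc]

noncomputable def diag (A : T.Algebra) [HasBinaryProduct A.A A.A] : A ⟶ A.prod A where
  f := Limits.diag A.A
  h := by
    rw [Limits.diag, map_lift_comp_prod_a, prod.comp_lift, T.map_id, Category.id_comp,
      Category.comp_id]

lemma diag_f (A : T.Algebra) [HasBinaryProduct A.A A.A] :
    A.diag.f = prod.lift (𝟙 A.A) (𝟙 A.A) := rfl

lemma Hom.map_initial_to_comp_a_comp [HasInitial 𝒳] {A B : T.Algebra} (f : A ⟶ B) :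
    T.map (initial.to A.A) ≫ A.a ≫ f.f = T.map (initial.to B.A) ≫ B.a := by
  rw [← f.h, ← T.map_comp_assoc, initial.to_comp]

end Algebra

section Subalgebra

variable {B : T.Algebra} {R : 𝒳} {m : R ⟶ B.A} [Mono m] {k : T.obj R ⟶ R}

lemma unit_comp_eq_id_of_comp_mono (hk : k ≫ m = T.map m ≫ B.a) : T.η.app R ≫ k = 𝟙 R := by
  rw [← cancel_mono m, Category.assoc, hk, ← T.η.naturality_assoc, Functor.id_map, B.unit]
  simp

lemma mu_comp_eq_map_comp_of_comp_mono (hk : k ≫ m = T.map m ≫ B.a) :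
    T.μ.app R ≫ k = T.map k ≫ k := by
  rw [← cancel_mono m, Category.assoc, Category.assoc, hk, ← T.μ.naturality_assoc,
    Functor.comp_map, B.assoc, ← T.map_comp_assoc, ← hk, T.map_comp_assoc, hk]

lemma exists_comp_mono_eq_map_comp_a [HasInitial 𝒳] [HasBinaryCoproducts 𝒳]
    [StrongEpi (coprod.desc (T.map (initial.to R)) (T.η.app R))]
    (c : T.obj (⊥_ 𝒳) ⟶ R) (hc : c ≫ m = T.map (initial.to B.A) ≫ B.a) :
    ∃ k : T.obj R ⟶ R, k ≫ m = T.map m ≫ B.a := by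
  -- `(𝟭 𝒳).obj R` makes the corner of the square syntactically that of the strong epimorphism.
  have sq : CommSq (coprod.desc c (𝟙 ((𝟭 𝒳).obj R)))
      (coprod.desc (T.map (initial.to R)) (T.η.app R)) m (T.map m ≫ B.a) := ⟨by
    apply coprod.hom_ext
    · rw [coprod.inl_desc_assoc, coprod.inl_desc_assoc, hc, ← T.map_comp_assoc, initial.to_comp]
    · rw [coprod.inr_desc_assoc, coprod.inr_desc_assoc, ← T.η.naturality_assoc, Functor.id_map,
        B.unit]
      simp⟩
  exact ⟨sq.lift, sq.fac_right⟩

end Subalgebra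

end CategoryTheory.Monad

open CategoryTheory.Monad in
/-- (Corollary 4.2) Let `T` be an essentially nullary monad on a category `𝒳` with finite
limits and finite coproducts, `(X,h)` a `T`-algebra, and `R ⇉ X` a reflexive relation on
`X`. Then `R` admits a unique `T`-algebra structure making `r₁`, `r₂` and `e` morphisms
of `T`-algebras. -/
theorem reflexive_relation_homomorphic {𝒳 : Type*} [Category 𝒳]
    [HasFiniteLimits 𝒳] [HasFiniteCoproducts 𝒳] (T : Monad 𝒳)
    (hEN : ∀ Y : 𝒳, StrongEpi (coprod.desc (T.map (initial.to Y)) (T.η.app Y)))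
    (A : T.Algebra) {R : 𝒳} (r₁ r₂ : R ⟶ A.A) (e : A.A ⟶ R)
    [Mono (prod.lift r₁ r₂)] (he₁ : e ≫ r₁ = 𝟙 A.A) (he₂ : e ≫ r₂ = 𝟙 A.A) :
    ∃! k : T.obj R ⟶ R,
      T.η.app R ≫ k = 𝟙 R ∧ T.μ.app R ≫ k = T.map k ≫ k ∧
        T.map r₁ ≫ A.a = k ≫ r₁ ∧ T.map r₂ ≫ A.a = k ≫ r₂ ∧
        T.map e ≫ k = A.a ≫ e := by
  have := hEN R
  have he : e ≫ prod.lift r₁ r₂ = A.diag.f := by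
    rw [Algebra.diag_f, prod.comp_lift, he₁, he₂]
  have hom_iff (k : T.obj R ⟶ R) :
      k ≫ prod.lift r₁ r₂ = T.map (prod.lift r₁ r₂) ≫ (A.prod A).a ↔
        T.map r₁ ≫ A.a = k ≫ r₁ ∧ T.map r₂ ≫ A.a = k ≫ r₂ := by
    rw [Algebra.map_lift_comp_prod_a, prod.comp_lift, prod.hom_ext_iff]
    simp only [prod.lift_fst, prod.lift_snd, eq_comm]
  obtain ⟨k, hk⟩ := exists_comp_mono_eq_map_comp_a (B := A.prod A) (m := prod.lift r₁ r₂)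
    (T.map (initial.to A.A) ≫ A.a ≫ e)
    (by rw [Category.assoc, Category.assoc, he, A.diag.map_initial_to_comp_a_comp])
  refine ⟨k, ⟨unit_comp_eq_id_of_comp_mono (B := A.prod A) hk,
    mu_comp_eq_map_comp_of_comp_mono (B := A.prod A) hk, ((hom_iff k).1 hk).1,
    ((hom_iff k).1 hk).2, ?_⟩, fun k' ⟨_, _, h₁, h₂, _⟩ => ?_⟩
  · rw [← cancel_mono (prod.lift r₁ r₂), Category.assoc, hk, ← T.map_comp_assoc, he, A.diag.h,
      Category.assoc, he]
  · rw [← cancel_mono (prod.lift r₁ r₂), (hom_iff k').2 ⟨h₁, h₂⟩, hk]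
end

section
/- Let (F ⊣ U, η, ε) : 𝒳 → 𝒜 be an adjunction between categories with pullbacks, where 𝒳 is pointed (has a zero object 0). Then the unit η is a cartesian natural transformation if and only if for every object X of 𝒳 the square with sides η_X : X → UF(X), !^X : X → 0, UF(!^X) : UF(X) → UF(0), and η_0 : 0 → UF(0) is a pullback, equivalently η_X is a kernel of UF(!^X) : UF(X) → UF(0). -/
open CategoryTheory Limits

namespace CategoryTheory.NatTrans

variable {J C : Type*} [Category J] [Category C]

theorem equifibered_iff_isPullback_isTerminal_from {F G : J ⥤ C} (α : F ⟶ G) {t : J}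
    (ht : IsTerminal t) :
    Equifibered α ↔
      ∀ j, IsPullback (F.map (ht.from j)) (α.app j) (α.app t) (G.map (ht.from j)) := by
  refine ⟨fun hα j ↦ hα (ht.from j), fun h i j f ↦ ?_⟩
  have hi := h i
  rw [ht.hom_ext (ht.from i) (f ≫ ht.from j), F.map_comp, G.map_comp] at hi
  exact hi.of_right (α.naturality f) (h j)

end CategoryTheory.NatTrans

theorem unit_cartesian_iff_pullback_at_terminal_general {𝒳 𝒜 : Type*} [Category 𝒳] [Category 𝒜]
    [HasZeroObject 𝒳]
    (F : 𝒳 ⥤ 𝒜) (U : 𝒜 ⥤ 𝒳) (adj : F ⊣ U) :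
    (∀ {X Y : 𝒳} (f : X ⟶ Y),
        IsPullback f (adj.unit.app X) (adj.unit.app Y) ((F ⋙ U).map f)) ↔
      (∀ X : 𝒳,
        IsPullback (terminal.from X) (adj.unit.app X) (adj.unit.app (⊤_ 𝒳))
          ((F ⋙ U).map (terminal.from X))) :=
  NatTrans.equifibered_iff_isPullback_isTerminal_from adj.unit terminalIsTerminal

/-- For an adjunction `F ⊣ U` with pointed domain `𝒳`, the unit `η` is cartesian (all
naturality squares are pullbacks) if and only if for every object `X` the naturality
square at `!^X : X ⟶ 0` is a pullback, i.e. `η_X` is a kernel of `UF(!^X)`. -/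
theorem unit_cartesian_iff_pullback_at_terminal {𝒳 𝒜 : Type*} [Category 𝒳] [Category 𝒜]
    [HasZeroObject 𝒳] [HasPullbacks 𝒳] [HasPullbacks 𝒜]
    (F : 𝒳 ⥤ 𝒜) (U : 𝒜 ⥤ 𝒳) (adj : F ⊣ U) :
    (∀ {X Y : 𝒳} (f : X ⟶ Y),
        IsPullback f (adj.unit.app X) (adj.unit.app Y) ((F ⋙ U).map f)) ↔
      (∀ X : 𝒳,
        IsPullback (terminal.from X) (adj.unit.app X) (adj.unit.app (⊤_ 𝒳))
          ((F ⋙ U).map (terminal.from X))) :=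
  unit_cartesian_iff_pullback_at_terminal_general F U adj
end
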